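/- arXiv:1508.06141 — 2 statements merged into one kernel-verified Lean document; each statement's English description precedes it below -/
import Mathlib

section
/- Let (G,θ) be a valued digraph (simple acyclic digraph with valuation 0 ≤ θ(x) ≤ d⁺(x)). If A and B are initial sections with A ⊆ B, |A| = k, |B| = q, then there exists a single peeling sequence [x_1, x_2, ...] such that A = {x_1,...,x_k} and B = {x_1,...,x_q}. Consequently, the poset of initial sections ordered by inclusion is graded with rank function A ↦ |A|. -/
open scoped Classical

variable {V : Type*}

/-- A digraph is acyclic when its transitive closure is irreflexive. -/
def Acyclic (E : V → V → Prop) : Prop := ∀ x, ¬ Relation.TransGen E x x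

/-- `θ` is an out-degree compatible valuation: `θ x ≤ d⁺(x)` for every vertex. -/
def IsOCV (E : V → V → Prop) (θ : V → ℕ) : Prop :=
  ∀ x, ∃ s : Finset V, (∀ y ∈ s, E x y) ∧ θ x ≤ s.card

/-- The current valuation after the vertices of `R` have been peeled. -/
noncomputable def curVal (E : V → V → Prop) (θ : V → ℕ) (R : Finset V) (x : V) : ℕ :=
  θ x - (R.filter fun y => E x y).card

/-- `x` is erasable in the valued digraph obtained after peeling the vertices of `R`. -/
def ErasableAt (E : V → V → Prop) (θ : V → ℕ) (R : Finset V) (x : V) : Prop :=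
  x ∉ R ∧ curVal E θ R x = 0 ∧ ∀ z, z ∉ R → E z x → curVal E θ R z ≠ 0

/-- `PeelFrom E θ R L`: starting from the state where `R` has been peeled, the
list `L` is a valid sequence of successive peelings. -/
def PeelFrom (E : V → V → Prop) (θ : V → ℕ) : Finset V → List V → Prop
  | _, [] => True
  | R, x :: L => ErasableAt E θ R x ∧ PeelFrom E θ (insert x R) L

/-- `A` is an initial section of some peeling sequence of the valued digraph `(G, θ)`. -/
def IsInitialSection (E : V → V → Prop) (θ : V → ℕ) (A : Finset V) : Prop :=
  ∃ L : List V, PeelFrom E θ ∅ L ∧ L.toFinset = A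

/-!
Let `A ⊊ B` be initial sections, `B` peeled by `L`. Among the vertices of `B \ A` whose current
value at `A` is `0` (there is one: the first vertex of `L` outside `A`), acyclicity provides one,
`v`, with no in-neighbour among them. Then `v` is erasable at `A`: an in-neighbour `z ∉ A` of
value `0` at `A` would be outside `B` (otherwise it would be one of them), but an unpeeled vertex
never has more than `θ z` peeled out-neighbours along `L`, while `A ∪ {v}` already gives it
`θ z + 1` of them in `B`. Peeling such vertices one at a time extends any peeling sequence of `A`
to one of `B`.
-/

theorem curVal_eq_zero_of_subset {E : V → V → Prop} {θ : V → ℕ} {R S : Finset V} (hRS : R ⊆ S)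
    {x : V} (hx : curVal E θ R x = 0) : curVal E θ S x = 0 := by
  have := Finset.card_le_card (Finset.filter_subset_filter (E x ·) hRS)
  unfold curVal at *
  omega

namespace PeelFrom

variable {E : V → V → Prop} {θ : V → ℕ}

theorem notMem {R : Finset V} {L : List V} (hL : PeelFrom E θ R L) {x : V} (hx : x ∈ L) :
    x ∉ R := by
  induction L generalizing R with
  | nil => simp at hx
  | cons c L ih =>
    rcases List.mem_cons.1 hx with rfl | hx
    · exact hL.1.1
    · exact fun hxR => ih hL.2 hx (Finset.mem_insert_of_mem hxR)

theorem nodup {R : Finset V} {L : List V} (hL : PeelFrom E θ R L) : L.Nodup := by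
  induction L generalizing R with
  | nil => simp
  | cons c L ih =>
    exact List.nodup_cons.2 ⟨fun hc => hL.2.notMem hc (Finset.mem_insert_self c R), ih hL.2⟩

theorem append_iff {R : Finset V} {P Q : List V} :
    PeelFrom E θ R (P ++ Q) ↔ PeelFrom E θ R P ∧ PeelFrom E θ (R ∪ P.toFinset) Q := by
  induction P generalizing R with
  | nil => simp [PeelFrom]
  | cons x P ih =>
    have hR : insert x R ∪ P.toFinset = R ∪ (x :: P).toFinset := by
      ext; simp
    simp only [List.cons_append, PeelFrom, ih, hR, and_assoc]

/-- Whenever an out-neighbour of `z` is peeled, `z` still has nonzero value, since the peeled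
vertex was erasable. -/
theorem card_filter_le {R : Finset V} {L : List V} (hL : PeelFrom E θ R L) {z : V}
    (hzR : z ∉ R) (hzL : z ∉ L) (hR : (R.filter (E z ·)).card ≤ θ z) :
    ((R ∪ L.toFinset).filter (E z ·)).card ≤ θ z := by
  induction L generalizing R with
  | nil => simpa using hR
  | cons c L ih =>
    obtain ⟨hzc, hzL⟩ := List.ne_and_not_mem_of_not_mem_cons hzL
    have hunion : R ∪ (c :: L).toFinset = insert c R ∪ L.toFinset := by
      ext; simp
    rw [hunion]
    refine ih hL.2 (by simp [hzc, hzR]) hzL ?_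
    rw [Finset.filter_insert]
    split_ifs with hE
    · have hne := hL.1.2.2 z hzR hE
      unfold curVal at hne
      have := Finset.card_insert_le c (R.filter (E z ·))
      omega
    · exact hR

theorem exists_notMem_curVal_eq_zero {R A : Finset V} {L : List V} (hL : PeelFrom E θ R L)
    (hRA : R ⊆ A) (hLA : ∃ b ∈ L, b ∉ A) : ∃ b ∈ L, b ∉ A ∧ curVal E θ A b = 0 := by
  induction L generalizing R with
  | nil => simp at hLA
  | cons c L ih =>
    by_cases hc : c ∈ A
    · obtain ⟨b, hbL, hbA, hb⟩ := ih hL.2 (Finset.insert_subset hc hRA) (by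
        obtain ⟨b, hb, hbA⟩ := hLA
        exact ⟨b, (List.mem_cons.1 hb).resolve_left (by rintro rfl; exact hbA hc), hbA⟩)
      exact ⟨b, List.mem_cons_of_mem c hbL, hbA, hb⟩
    · exact ⟨c, List.mem_cons_self, hc, curVal_eq_zero_of_subset hRA hL.1.2.1⟩

end PeelFrom

theorem Acyclic.exists_mem_forall_not_rel {E : V → V → Prop} (hac : Acyclic E)
    {D : Finset V} (hD : D.Nonempty) : ∃ v ∈ D, ∀ w ∈ D, ¬ E w v := by
  induction D using Finset.strongInduction with
  | _ D ih =>
    obtain ⟨v, hv⟩ := hD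
    by_cases h : ∀ w ∈ D, ¬ E w v
    · exact ⟨v, hv, h⟩
    push Not at h
    obtain ⟨w, hwD, hwv⟩ := h
    -- Recurse into the ancestors of `v` in `D`, a proper subset since `v` is not its own ancestor.
    set D' := D.filter (Relation.TransGen E · v)
    have hD' : D' ⊂ D := Finset.filter_ssubset.2 ⟨v, hv, hac v⟩
    obtain ⟨u, hu, hu'⟩ := ih D' hD' ⟨w, Finset.mem_filter.2 ⟨hwD, .single hwv⟩⟩
    obtain ⟨huD, huv⟩ := Finset.mem_filter.1 hu
    exact ⟨u, huD, fun x hx hxu => hu' x (Finset.mem_filter.2 ⟨hx, .head hxu huv⟩) hxu⟩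

section InitialSection

variable {E : V → V → Prop} {θ : V → ℕ}

theorem IsInitialSection.exists_erasableAt (hac : Acyclic E) {A B : Finset V}
    (hB : IsInitialSection E θ B) (hAB : A ⊂ B) : ∃ v ∈ B, ErasableAt E θ A v := by
  obtain ⟨L, hL, rfl⟩ := hB
  set D := (L.toFinset \ A).filter (curVal E θ A · = 0)
  have hD : D.Nonempty := by
    obtain ⟨b, hbL, hbA⟩ := Finset.exists_of_ssubset hAB
    obtain ⟨b, hbL, hbA, hb⟩ :=
      hL.exists_notMem_curVal_eq_zero (Finset.empty_subset A) ⟨b, List.mem_toFinset.1 hbL, hbA⟩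
    exact ⟨b, by simp [D, hbL, hbA, hb]⟩
  obtain ⟨v, hvD, hv⟩ := hac.exists_mem_forall_not_rel hD
  simp only [D, Finset.mem_filter, Finset.mem_sdiff] at hvD hv
  obtain ⟨⟨hvL, hvA⟩, hv0⟩ := hvD
  refine ⟨v, hvL, hvA, hv0, fun z hzA hzv hz0 => ?_⟩
  have hzL : z ∉ L := fun hzL => hv z ⟨⟨List.mem_toFinset.2 hzL, hzA⟩, hz0⟩ hzv
  have hle := hL.card_filter_le (Finset.notMem_empty z) hzL (by simp)
  rw [Finset.empty_union] at hle
  have hsub : insert v (A.filter (E z ·)) ⊆ L.toFinset.filter (E z ·) :=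
    Finset.insert_subset (Finset.mem_filter.2 ⟨hvL, hzv⟩)
      (Finset.filter_subset_filter _ hAB.subset)
  have hcard := Finset.card_le_card hsub
  rw [Finset.card_insert_of_notMem (fun h => hvA (Finset.mem_of_mem_filter v h))] at hcard
  unfold curVal at hz0
  omega

theorem PeelFrom.append_singleton {L : List V} (hL : PeelFrom E θ ∅ L) {v : V}
    (hv : ErasableAt E θ L.toFinset v) : PeelFrom E θ ∅ (L ++ [v]) :=
  PeelFrom.append_iff.2 ⟨hL, by simpa [PeelFrom] using hv⟩

theorem IsInitialSection.insert {A : Finset V} (hA : IsInitialSection E θ A) {v : V}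
    (hv : ErasableAt E θ A v) : IsInitialSection E θ (insert v A) := by
  obtain ⟨L, hL, rfl⟩ := hA
  exact ⟨L ++ [v], hL.append_singleton hv, by ext; simp⟩

theorem PeelFrom.exists_append_of_subset (hac : Acyclic E) {L : List V}
    (hL : PeelFrom E θ ∅ L) {B : Finset V} (hB : IsInitialSection E θ B) (hLB : L.toFinset ⊆ B) :
    ∃ L', PeelFrom E θ ∅ (L ++ L') ∧ (L ++ L').toFinset = B := by
  rcases hLB.eq_or_ssubset with hLB | hLB
  · exact ⟨[], by simpa using hL, by simpa using hLB⟩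
  obtain ⟨v, hvB, hv⟩ := hB.exists_erasableAt hac hLB
  have hLv : (L ++ [v]).toFinset = insert v L.toFinset := by
    ext; simp
  have hdec : (B \ insert v L.toFinset).card < (B \ L.toFinset).card := by
    rw [Finset.sdiff_insert]
    exact Finset.card_erase_lt_of_mem (Finset.mem_sdiff.2 ⟨hvB, hv.1⟩)
  obtain ⟨L', hL', hL'B⟩ := (hL.append_singleton hv).exists_append_of_subset hac hB
    (hLv ▸ Finset.insert_subset hvB hLB.subset)
  exact ⟨v :: L', by simpa using hL', by simpa using hL'B⟩
termination_by (B \ L.toFinset).card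

end InitialSection

theorem initialSections_graded_general (E : V → V → Prop) (θ : V → ℕ)
    (hac : Acyclic E) :
    (∀ A B : Finset V, IsInitialSection E θ A → IsInitialSection E θ B → A ⊆ B →
      ∃ L : List V, PeelFrom E θ ∅ L ∧ L.length = B.card ∧
        (L.take A.card).toFinset = A ∧ L.toFinset = B) ∧
    (∀ A B : Finset V, IsInitialSection E θ A → IsInitialSection E θ B → A ⊂ B →
      ∃ C : Finset V, IsInitialSection E θ C ∧ A ⊆ C ∧ C ⊆ B ∧
        C.card = A.card + 1) := by
  refine ⟨fun A B hA hB hAB => ?_, fun A B hA hB hAB => ?_⟩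
  · obtain ⟨LA, hLA, rfl⟩ := hA
    obtain ⟨L', hL, hLB⟩ := hLA.exists_append_of_subset hac hB hAB
    refine ⟨LA ++ L', hL, ?_, ?_, hLB⟩
    · rw [← hLB, List.toFinset_card_of_nodup hL.nodup]
    · rw [List.toFinset_card_of_nodup hLA.nodup, List.take_left]
  · obtain ⟨v, hvB, hv⟩ := hB.exists_erasableAt hac hAB
    exact ⟨insert v A, hA.insert hv, Finset.subset_insert v A,
      Finset.insert_subset hvB hAB.subset, Finset.card_insert_of_notMem hv.1⟩

/-- if `A ⊆ B` are initial sections, some single peeling sequence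
peels first `A` and then the rest of `B`; consequently the poset of initial
sections ordered by inclusion is graded with rank function `A ↦ |A|`. -/
theorem initialSections_graded (E : V → V → Prop) (θ : V → ℕ)
    (hac : Acyclic E) (hocv : IsOCV E θ) :
    (∀ A B : Finset V, IsInitialSection E θ A → IsInitialSection E θ B → A ⊆ B →
      ∃ L : List V, PeelFrom E θ ∅ L ∧ L.length = B.card ∧
        (L.take A.card).toFinset = A ∧ L.toFinset = B) ∧
    (∀ A B : Finset V, IsInitialSection E θ A → IsInitialSection E θ B → A ⊂ B →
      ∃ C : Finset V, IsInitialSection E θ C ∧ A ⊆ C ∧ C ⊆ B ∧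
        C.card = A.card + 1) :=
  initialSections_graded_general E θ hac
end

section
/- For a valued digraph (G,θ), the poset (IS(G,θ), ⊆) of initial sections ordered by inclusion is a complete meet semi-lattice: every subset S of IS(G,θ) has an infimum. Moreover, if G is finite, then (IS(G,θ), ⊆) is a complete lattice, with the full vertex set V as the maximum element. -/
/-!
A finite set `A` is an initial section exactly when every vertex of `A` has at least `θ x`
out-neighbours in `A` and every vertex outside `A` has at most `θ x`: one peeling step preserves
both conditions, and conversely, by acyclicity, a set satisfying them is reached by peeling
one vertex at a time. The first condition is stable under unions, so below a nonempty family
of initial sections there is a largest set satisfying it; its maximality forces the second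
condition as well, and it is the meet. Joins are meets of upper bounds, and when `V` is finite
the whole vertex set is an upper bound because `θ x ≤ d⁺(x)`.
-/

open scoped Classical

variable {V : Type*}

section ValuedDigraph

variable {E : V → V → Prop} {θ : V → ℕ}

theorem Acyclic.exists_source (hac : Acyclic E) {s : Finset V}
    (hs : s.Nonempty) : ∃ x ∈ s, ∀ y ∈ s, ¬ E y x := by
  have : IsStrictOrder V (Relation.TransGen E) :=
    { irrefl := hac, trans := fun _ _ _ => Relation.TransGen.trans }
  obtain ⟨x, hx, hmin⟩ :=
    (Set.wellFoundedOn_iff.mp (s.wellFoundedOn (r := Relation.TransGen E))).has_min _ hs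
  exact ⟨x, hx, fun y hy hyx => hmin y hy ⟨.single hyx, hy, hx⟩⟩

theorem Acyclic.swap (hac : Acyclic E) : Acyclic (Function.swap E) :=
  fun x h => hac x (Relation.transGen_swap.mp h)

theorem Acyclic.exists_sink (hac : Acyclic E) {s : Finset V}
    (hs : s.Nonempty) : ∃ x ∈ s, ∀ y ∈ s, ¬ E x y :=
  hac.swap.exists_source hs

noncomputable def outDegreeIn (E : V → V → Prop) (A : Finset V) (x : V) : ℕ :=
  (A.filter (E x)).card

theorem outDegreeIn_mono {A B : Finset V} (h : A ⊆ B) (x : V) :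
    outDegreeIn E A x ≤ outDegreeIn E B x :=
  Finset.card_le_card (Finset.filter_subset_filter _ h)

theorem outDegreeIn_insert_of_not_adj {A : Finset V} {x y : V} (h : ¬ E x y) :
    outDegreeIn E (insert y A) x = outDegreeIn E A x := by
  rw [outDegreeIn, Finset.filter_insert, if_neg h, outDegreeIn]

theorem outDegreeIn_insert_le (A : Finset V) (x y : V) :
    outDegreeIn E (insert y A) x ≤ outDegreeIn E A x + 1 := by
  unfold outDegreeIn
  rw [Finset.filter_insert]
  split_ifs
  · exact Finset.card_insert_le _ _
  · exact Nat.le_succ _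

theorem outDegreeIn_lt_of_adj {A B : Finset V} {x y : V} (hAB : A ⊆ B) (hyA : y ∉ A)
    (hyB : y ∈ B) (h : E x y) : outDegreeIn E A x < outDegreeIn E B x :=
  Finset.card_lt_card <| (Finset.ssubset_iff_of_subset (Finset.filter_subset_filter _ hAB)).mpr
    ⟨y, Finset.mem_filter.mpr ⟨hyB, h⟩, fun hy => hyA (Finset.mem_of_mem_filter _ hy)⟩

theorem curVal_eq_zero_iff {R : Finset V} {x : V} :
    curVal E θ R x = 0 ↔ θ x ≤ outDegreeIn E R x :=
  Nat.sub_eq_zero_iff_le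

theorem curVal_ne_zero_iff {R : Finset V} {x : V} :
    curVal E θ R x ≠ 0 ↔ outDegreeIn E R x < θ x :=
  Nat.sub_ne_zero_iff_lt

def IsSupported (E : V → V → Prop) (θ : V → ℕ) (A : Finset V) : Prop :=
  ∀ x ∈ A, θ x ≤ outDegreeIn E A x

def IsConfined (E : V → V → Prop) (θ : V → ℕ) (A : Finset V) : Prop :=
  ∀ x ∉ A, outDegreeIn E A x ≤ θ x

theorem isSupported_empty : IsSupported E θ ∅ := by
  simp [IsSupported]

theorem isConfined_empty : IsConfined E θ ∅ := fun x _ => by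
  simp [outDegreeIn]

theorem IsSupported.insert {A : Finset V} {x : V} (hA : IsSupported E θ A)
    (hx : θ x ≤ outDegreeIn E A x) : IsSupported E θ (insert x A) := by
  intro y hy
  have hmono := outDegreeIn_mono (E := E) (Finset.subset_insert x A) y
  rcases Finset.mem_insert.mp hy with rfl | hy
  · exact hx.trans hmono
  · exact (hA y hy).trans hmono

theorem isSupported_sup {T : Finset (Finset V)} (hT : ∀ A ∈ T, IsSupported E θ A) :
    IsSupported E θ (T.sup id) := by
  intro x hx
  obtain ⟨A, hAT, hxA⟩ := Finset.mem_sup.mp hx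
  exact (hT A hAT x hxA).trans (outDegreeIn_mono (Finset.le_sup (f := id) hAT) x)

theorem IsConfined.insert_of_erasableAt {R : Finset V} {x : V} (hR : IsConfined E θ R)
    (hx : ErasableAt E θ R x) : IsConfined E θ (insert x R) := by
  intro z hz
  rw [Finset.mem_insert, not_or] at hz
  by_cases hzx : E z x
  · have := curVal_ne_zero_iff.mp (hx.2.2 z hz.2 hzx)
    have := outDegreeIn_insert_le (E := E) R z x
    omega
  · rw [outDegreeIn_insert_of_not_adj hzx]
    exact hR z hz.2

theorem PeelFrom.isSupported_and_isConfined_union {R : Finset V} {L : List V}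
    (hL : PeelFrom E θ R L) (hsupp : IsSupported E θ R) (hconf : IsConfined E θ R) :
    IsSupported E θ (R ∪ L.toFinset) ∧ IsConfined E θ (R ∪ L.toFinset) := by
  induction L generalizing R with
  | nil => simpa using ⟨hsupp, hconf⟩
  | cons x L ih =>
    obtain ⟨hx, hL⟩ := hL
    have := ih hL (hsupp.insert (curVal_eq_zero_iff.mp hx.2.1)) (hconf.insert_of_erasableAt hx)
    rwa [Finset.insert_union, ← Finset.union_insert, ← List.toFinset_cons] at this

/-- The next vertex to peel towards `A`: a source among the vertices of `A \ R` that are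
already saturated by `R`; a sink of `A \ R` shows such vertices exist. -/
theorem exists_erasableAt_of_ssubset (hac : Acyclic E) {R A : Finset V} (hRA : R ⊂ A)
    (hsupp : IsSupported E θ A) (hconf : IsConfined E θ A) :
    ∃ x ∈ A \ R, ErasableAt E θ R x := by
  set Z := (A \ R).filter fun x => θ x ≤ outDegreeIn E R x
  have hZ : Z.Nonempty := by
    obtain ⟨x, hx, hsink⟩ := hac.exists_sink (Finset.sdiff_nonempty.mpr hRA.not_subset)
    refine ⟨x, Finset.mem_filter.mpr ⟨hx, (hsupp x (Finset.sdiff_subset hx)).trans ?_⟩⟩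
    refine Finset.card_le_card fun y hy => ?_
    obtain ⟨hyA, hxy⟩ := Finset.mem_filter.mp hy
    refine Finset.mem_filter.mpr ⟨?_, hxy⟩
    by_contra hyR
    exact hsink y (Finset.mem_sdiff.mpr ⟨hyA, hyR⟩) hxy
  obtain ⟨x, hxZ, hsrc⟩ := hac.exists_source hZ
  obtain ⟨hx, hxθ⟩ := Finset.mem_filter.mp hxZ
  obtain ⟨hxA, hxR⟩ := Finset.mem_sdiff.mp hx
  refine ⟨x, hx, hxR, curVal_eq_zero_iff.mpr hxθ, fun z hzR hzx => curVal_ne_zero_iff.mpr ?_⟩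
  by_cases hzA : z ∈ A
  · by_contra! hle
    exact hsrc z (Finset.mem_filter.mpr ⟨Finset.mem_sdiff.mpr ⟨hzA, hzR⟩, hle⟩) hzx
  · exact (outDegreeIn_lt_of_adj hRA.subset hxR hxA hzx).trans_le (hconf z hzA)

theorem exists_peelFrom (hac : Acyclic E) {R A : Finset V} (hRA : R ⊆ A)
    (hsupp : IsSupported E θ A) (hconf : IsConfined E θ A) :
    ∃ L, PeelFrom E θ R L ∧ R ∪ L.toFinset = A := by
  induction h : (A \ R).card generalizing R with
  | zero =>
    refine ⟨[], trivial, ?_⟩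
    rw [Finset.card_eq_zero, Finset.sdiff_eq_empty_iff_subset] at h
    simpa using hRA.antisymm h
  | succ n ih =>
    have hRA' : R ⊂ A := hRA.ssubset_of_ne fun hRA => by simp [hRA] at h
    obtain ⟨x, hx, hxR⟩ := exists_erasableAt_of_ssubset hac hRA' hsupp hconf
    obtain ⟨hxA, -⟩ := Finset.mem_sdiff.mp hx
    obtain ⟨L, hL, hLA⟩ := ih (Finset.insert_subset hxA hRA) (by
      rw [Finset.sdiff_insert, Finset.card_erase_of_mem hx, h, Nat.add_sub_cancel])
    refine ⟨x :: L, ⟨hxR, hL⟩, ?_⟩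
    rwa [List.toFinset_cons, Finset.union_insert, ← Finset.insert_union]

theorem isInitialSection_iff (hac : Acyclic E) {A : Finset V} :
    IsInitialSection E θ A ↔ IsSupported E θ A ∧ IsConfined E θ A := by
  constructor
  · rintro ⟨L, hL, rfl⟩
    simpa using hL.isSupported_and_isConfined_union isSupported_empty isConfined_empty
  · rintro ⟨hsupp, hconf⟩
    simpa [IsInitialSection] using exists_peelFrom hac (Finset.empty_subset A) hsupp hconf

theorem exists_isGreatest_isSupported_lowerBound {S : Set (Finset V)} (hS : S.Nonempty) :
    ∃ C, IsGreatest {D | IsSupported E θ D ∧ D ∈ lowerBounds S} C := by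
  obtain ⟨A₀, hA₀⟩ := hS
  let T := A₀.powerset.filter fun D => IsSupported E θ D ∧ D ∈ lowerBounds S
  have hT : ∀ D ∈ T, IsSupported E θ D ∧ D ∈ lowerBounds S := fun D hD =>
    (Finset.mem_filter.mp hD).2
  refine ⟨T.sup id, ⟨isSupported_sup fun D hD => (hT D hD).1, ?_⟩, fun D hD => ?_⟩
  · exact fun A hA => Finset.sup_le fun D hD => (hT D hD).2 hA
  · exact Finset.le_sup (f := id)
      (Finset.mem_filter.mpr ⟨Finset.mem_powerset.mpr (hD.2 hA₀), hD⟩)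

/-- A vertex outside `C` with more than `θ x` out-neighbours in `C` lies in every confined
`A ⊇ C`, so adding it to `C` would give a larger supported lower bound. -/
theorem IsGreatest.isConfined {S : Set (Finset V)} {C : Finset V}
    (hC : IsGreatest {D | IsSupported E θ D ∧ D ∈ lowerBounds S} C)
    (hS : ∀ A ∈ S, IsConfined E θ A) : IsConfined E θ C := by
  intro x hxC
  by_contra! hlt
  have hxS : ∀ A ∈ S, x ∈ A := fun A hA => by
    by_contra hxA
    exact (hlt.trans_le (outDegreeIn_mono (hC.1.2 hA) x)).not_ge (hS A hA x hxA)
  have hins : insert x C ∈ {D | IsSupported E θ D ∧ D ∈ lowerBounds S} :=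
    ⟨hC.1.1.insert hlt.le, fun A hA => Finset.insert_subset (hxS A hA) (hC.1.2 hA)⟩
  exact hxC (hC.2 hins (Finset.mem_insert_self x C))

theorem exists_isGreatest_isInitialSection_lowerBound (hac : Acyclic E) {S : Set (Finset V)}
    (hS : S.Nonempty) (hIS : ∀ A ∈ S, IsInitialSection E θ A) :
    ∃ C, IsGreatest {D | IsInitialSection E θ D ∧ D ∈ lowerBounds S} C := by
  obtain ⟨C, hC⟩ := exists_isGreatest_isSupported_lowerBound (E := E) (θ := θ) hS
  have hconf := hC.isConfined fun A hA => ((isInitialSection_iff hac).mp (hIS A hA)).2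
  exact ⟨C, ⟨(isInitialSection_iff hac).mpr ⟨hC.1.1, hconf⟩, hC.1.2⟩,
    fun D hD => hC.2 ⟨((isInitialSection_iff hac).mp hD.1).1, hD.2⟩⟩

theorem exists_isLeast_isInitialSection_upperBound (hac : Acyclic E) {S : Set (Finset V)}
    (hIS : ∀ A ∈ S, IsInitialSection E θ A)
    (hbdd : ∃ B, IsInitialSection E θ B ∧ B ∈ upperBounds S) :
    ∃ C, IsLeast {D | IsInitialSection E θ D ∧ D ∈ upperBounds S} C := by
  obtain ⟨C, hC⟩ := exists_isGreatest_isInitialSection_lowerBound hac hbdd fun B hB => hB.1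
  exact ⟨C, ⟨hC.1.1, fun A hA => hC.2 ⟨hIS A hA, fun B hB => hB.2 hA⟩⟩,
    fun D hD => hC.1.2 hD⟩

theorem isInitialSection_univ [Fintype V] (hac : Acyclic E) (hocv : IsOCV E θ) :
    IsInitialSection E θ Finset.univ := by
  refine (isInitialSection_iff hac).mpr
    ⟨fun x _ => ?_, fun x hx => absurd (Finset.mem_univ x) hx⟩
  obtain ⟨s, hs, hθ⟩ := hocv x
  exact hθ.trans <| Finset.card_le_card fun y hy =>
    Finset.mem_filter.mpr ⟨Finset.mem_univ y, hs y hy⟩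

end ValuedDigraph

/-- the poset of initial sections of a valued digraph, ordered by
inclusion, is a complete meet semi-lattice (every nonempty family has an
infimum); and when the vertex set is finite, it is a complete lattice with the
full vertex set as maximum. -/
theorem initialSections_completeMeetSemilattice (E : V → V → Prop) (θ : V → ℕ)
    (hac : Acyclic E) (hocv : IsOCV E θ) :
    (∀ S : Set (Finset V), S.Nonempty → (∀ A ∈ S, IsInitialSection E θ A) →
      ∃ C : Finset V, IsInitialSection E θ C ∧ (∀ A ∈ S, C ⊆ A) ∧
        ∀ D : Finset V, IsInitialSection E θ D → (∀ A ∈ S, D ⊆ A) → D ⊆ C) ∧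
    (∀ _ : Fintype V,
      IsInitialSection E θ Finset.univ ∧
      (∀ A : Finset V, IsInitialSection E θ A → A ⊆ Finset.univ) ∧
      ∀ S : Set (Finset V), (∀ A ∈ S, IsInitialSection E θ A) →
        ∃ C : Finset V, IsInitialSection E θ C ∧ (∀ A ∈ S, A ⊆ C) ∧
          ∀ D : Finset V, IsInitialSection E θ D → (∀ A ∈ S, A ⊆ D) → C ⊆ D) := by
  refine ⟨fun S hS hIS => ?_, fun _ => ⟨isInitialSection_univ hac hocv,
    fun A _ => Finset.subset_univ A, fun S hIS => ?_⟩⟩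
  · obtain ⟨C, ⟨hC, hClow⟩, hCmax⟩ :=
      exists_isGreatest_isInitialSection_lowerBound hac hS hIS
    exact ⟨C, hC, fun A hA => hClow hA, fun D hD hDS => hCmax ⟨hD, fun A hA => hDS A hA⟩⟩
  · have hbdd : ∃ B, IsInitialSection E θ B ∧ B ∈ upperBounds S :=
      ⟨Finset.univ, isInitialSection_univ hac hocv, fun A _ => Finset.subset_univ A⟩
    obtain ⟨C, ⟨hC, hCup⟩, hCmin⟩ := exists_isLeast_isInitialSection_upperBound hac hIS hbdd
    exact ⟨C, hC, fun A hA => hCup hA, fun D hD hDS => hCmin ⟨hD, fun A hA => hDS A hA⟩⟩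
end
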